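/- arXiv:1006.5704 — 6 statements merged into one kernel-verified Lean document; each statement's English description precedes it below -/
import Mathlib

section
/- Let r and s be integers with r ≥ 2 and s ≥ 2, and let P be a finite (𝐫+𝐬)-free poset. Then there exists a function I assigning to each element x ∈ P a non-empty set I(x) of consecutive integers such that: (1) for every integer k, the set {x ∈ P : k ∈ I(x)} induces a subposet of height at most r−1; and (2) whenever x and y are incomparable in P, either I(x) and I(y) have non-empty intersection, or at most s−2 integers lie strictly between I(x) and I(y) (i.e., strictly greater than every element of one of the sets and strictly less than every element of the other). -/
/-!
Stratify `P` by height into blocks of `r - 1` consecutive heights and let `I x` start at the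
block of `x` and reach up to `s - 1` blocks below the highest block of an element incomparable
to `x`; this makes (2) immediate. For (1), if a chain `C` of size `r` had a common level `k`,
its least element `x₀` would lie in a block below `k` (heights along a chain are distinct), so
some `y` incomparable to `x₀` lies `s - 1` blocks above `k`. The top `s` elements of a longest
chain below `y` then all lie above the heights of `C` and below `y`, so they form an `s`-chain
incomparable to `C`.
-/

open Finset

theorem Int.Icc_inter_nonempty_or_ncard_between_le {a b c d : ℤ} (n : ℕ) (hab : a ≤ b)
    (hcd : c ≤ d) (hcb : c ≤ b + n + 1) (had : a ≤ d + n + 1) :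
    (Icc a b ∩ Icc c d).Nonempty ∨
      Set.ncard {k : ℤ | ((∀ x ∈ Icc a b, x < k) ∧ (∀ y ∈ Icc c d, k < y)) ∨
        ((∀ y ∈ Icc c d, y < k) ∧ (∀ x ∈ Icc a b, k < x))} ≤ n := by
  by_cases hoverlap : c ≤ b ∧ a ≤ d
  · exact .inl ⟨max a c, by simp only [mem_inter, mem_Icc]; omega⟩
  refine .inr ?_
  have hsub : {k : ℤ | ((∀ x ∈ Icc a b, x < k) ∧ (∀ y ∈ Icc c d, k < y)) ∨
      ((∀ y ∈ Icc c d, y < k) ∧ (∀ x ∈ Icc a b, k < x))} ⊆ ↑(Ioo b c ∪ Ioo d a) := by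
    rintro k (⟨hbk, hkc⟩ | ⟨hdk, hka⟩)
    · have := hbk b (right_mem_Icc.2 hab)
      have := hkc c (left_mem_Icc.2 hcd)
      simp only [coe_union, coe_Ioo, Set.mem_union, Set.mem_Ioo]
      omega
    · have := hdk d (right_mem_Icc.2 hcd)
      have := hka a (left_mem_Icc.2 hab)
      simp only [coe_union, coe_Ioo, Set.mem_union, Set.mem_Ioo]
      omega
  calc _ ≤ (Ioo b c ∪ Ioo d a).card := by
        rw [← Set.ncard_coe_finset]; exact Set.ncard_le_ncard hsub (Finset.finite_toSet _)
    _ ≤ (Ioo b c).card + (Ioo d a).card := card_union_le _ _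
    _ ≤ n := by rw [Int.card_Ioo, Int.card_Ioo]; omega

section Height

variable {α : Type*} [PartialOrder α] [Fintype α]

noncomputable def natHeight (x : α) : ℕ := (Order.height x).toNat

theorem Order.height_ne_top (x : α) : Order.height x ≠ ⊤ :=
  ne_top_of_le_ne_top (ENat.natCast_ne_top (Fintype.card α))
    (Order.height_le fun p _ => mod_cast p.length_lt_card.le)

theorem natCast_natHeight (x : α) : (natHeight x : ℕ∞) = Order.height x :=
  ENat.natCast_toNat (Order.height_ne_top x)

theorem natHeight_strictMono : StrictMono (natHeight : α → ℕ) := fun x y hxy => by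
  have := Order.height_strictMono hxy (Order.height_ne_top x).lt_top
  rwa [← natCast_natHeight, ← natCast_natHeight, Nat.cast_lt] at this

theorem IsChain.le_of_natHeight_le {c : Set α} (hc : IsChain (· ≤ ·) c) {x y : α}
    (hx : x ∈ c) (hy : y ∈ c) (hxy : natHeight x ≤ natHeight y) : x ≤ y := by
  rcases hc.total hx hy with h | h
  · exact h
  rcases h.lt_or_eq with h | rfl
  · exact absurd (natHeight_strictMono h) hxy.not_gt
  · exact le_rfl

theorem IsChain.card_le_of_natHeight_mem_Icc {c : Finset α} (hc : IsChain (· ≤ ·) (c : Set α))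
    {m M : ℕ} (h : ∀ x ∈ c, natHeight x ∈ Icc m M) : c.card ≤ M + 1 - m := by
  have hinj : Set.InjOn natHeight (c : Set α) := fun x hx y hy hxy =>
    (hc.le_of_natHeight_le hx hy hxy.le).antisymm (hc.le_of_natHeight_le hy hx hxy.ge)
  calc c.card = (c.image natHeight).card := (card_image_of_injOn hinj).symm
    _ ≤ (Icc m M).card := card_le_card fun n hn => by
      obtain ⟨x, hx, rfl⟩ := mem_image.1 hn
      exact h x hx
    _ = M + 1 - m := Nat.card_Icc m M

theorem IsChain.exists_least_natHeight_add_lt {c : Finset α} (hc : IsChain (· ≤ ·) (c : Set α))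
    {n M : ℕ} (hn : n < c.card) (hM : ∀ x ∈ c, natHeight x ≤ M) :
    ∃ x₀ ∈ c, (∀ x ∈ c, x₀ ≤ x) ∧ natHeight x₀ + n ≤ M := by
  obtain ⟨x₀, hx₀, hmin⟩ := c.exists_min_image natHeight (card_pos.1 (by omega))
  have := hc.card_le_of_natHeight_mem_Icc fun x hx => mem_Icc.2 ⟨hmin x hx, hM x hx⟩
  exact ⟨x₀, hx₀, fun x hx => hc.le_of_natHeight_le hx₀ hx (hmin x hx), by omega⟩

theorem index_le_natHeight (p : LTSeries α) (i : Fin (p.length + 1)) :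
    (i : ℕ) ≤ natHeight (p i) := by
  have := Order.index_le_height p i
  rwa [← natCast_natHeight, Nat.cast_le] at this

theorem exists_isChain_card_eq_of_le_natHeight (y : α) {J : ℕ} (hJ : J ≤ natHeight y) :
    ∃ B : Finset α, IsChain (· ≤ ·) (B : Set α) ∧ B.card = natHeight y + 1 - J ∧
      ∀ b ∈ B, b ≤ y ∧ J ≤ natHeight b := by
  obtain ⟨p, hpy, hp⟩ := Order.exists_series_of_le_height y (natCast_natHeight y).le
  let q : LTSeries α := p.drop ⟨J, by omega⟩
  refine ⟨univ.map ⟨q, q.strictMono.injective⟩, ?_, ?_, fun b hb => ?_⟩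
  · simpa using q.strictMono.monotone.isChain_range
  · simp only [card_map, card_univ, RelSeries.drop_length, hp, Fintype.card_fin, q]
    omega
  obtain ⟨j, -, rfl⟩ := mem_map.1 hb
  have hqy : q.last = y := (p.last_drop _).trans hpy
  have hq0 : q 0 = p ⟨J, by omega⟩ := p.head_drop _
  refine ⟨hqy ▸ q.strictMono.monotone (Fin.le_last j), ?_⟩
  calc J ≤ natHeight (p ⟨J, by omega⟩) := index_le_natHeight p ⟨J, by omega⟩
    _ = natHeight (q 0) := by rw [hq0]
    _ ≤ natHeight (q j) := natHeight_strictMono.monotone (q.strictMono.monotone (Fin.zero_le j))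

end Height

namespace ChainSumFree

variable {α : Type*} [PartialOrder α]

def ContainsSumOfChains (α : Type*) [PartialOrder α] (r s : ℕ) : Prop :=
  ∃ A B : Finset α, A.card = r ∧ B.card = s ∧ Disjoint A B ∧
    IsChain (· ≤ ·) (A : Set α) ∧ IsChain (· ≤ ·) (B : Set α) ∧
    ∀ a ∈ A, ∀ b ∈ B, ¬ a ≤ b ∧ ¬ b ≤ a

theorem ContainsSumOfChains.of_le {r s : ℕ} {A B : Finset α}
    (hA : IsChain (· ≤ ·) (A : Set α)) (hB : IsChain (· ≤ ·) (B : Set α))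
    (hrA : r ≤ A.card) (hsB : s ≤ B.card) (hAB : ∀ a ∈ A, ∀ b ∈ B, ¬ a ≤ b ∧ ¬ b ≤ a) :
    ContainsSumOfChains α r s := by
  obtain ⟨A', hA'A, hA'⟩ := exists_subset_card_eq hrA
  obtain ⟨B', hB'B, hB'⟩ := exists_subset_card_eq hsB
  refine ⟨A', B', hA', hB', disjoint_left.2 fun a haA' haB' => ?_, hA.mono (coe_subset.2 hA'A),
    hB.mono (coe_subset.2 hB'B), fun a ha b hb => hAB a (hA'A ha) b (hB'B hb)⟩
  exact (hAB a (hA'A haA') a (hB'B haB')).1 le_rfl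

variable [Fintype α]

noncomputable def block (r : ℕ) (x : α) : ℕ := natHeight x / (r - 1)

open scoped Classical in
noncomputable def incomparables (x : α) : Finset α := {y | ¬ x ≤ y ∧ ¬ y ≤ x}

theorem mem_incomparables {x y : α} : y ∈ incomparables x ↔ ¬ x ≤ y ∧ ¬ y ≤ x := by
  simp [incomparables]

noncomputable def blockReach (r s : ℕ) (x : α) : ℕ :=
  max (block r x) ((incomparables x).sup (block r) - (s - 1))

theorem block_le_blockReach (r s : ℕ) (x : α) : block r x ≤ blockReach r s x :=
  le_max_left _ _

theorem block_le_blockReach_add_of_incomparable (r s : ℕ) {x y : α} (hxy : ¬ x ≤ y)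
    (hyx : ¬ y ≤ x) : block r y ≤ blockReach r s x + (s - 1) := by
  have := le_sup (f := block r) (mem_incomparables.2 ⟨hxy, hyx⟩)
  have := le_max_right (block r x) ((incomparables x).sup (block r) - (s - 1))
  unfold blockReach
  omega

theorem exists_incomparable_of_block_lt_of_le_blockReach {r s K : ℕ} {x : α}
    (hx : block r x < K) (hK : K ≤ blockReach r s x) :
    ∃ y, ¬ x ≤ y ∧ ¬ y ≤ x ∧ K + (s - 1) ≤ block r y := by
  have hsup : K + (s - 1) ≤ (incomparables x).sup (block r) := by
    unfold blockReach at hK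
    omega
  obtain ⟨y, hy, hKy⟩ := (Finset.le_sup_iff (by rw [Nat.bot_eq_zero]; omega)).1 hsup
  exact ⟨y, (mem_incomparables.1 hy).1, (mem_incomparables.1 hy).2, hKy⟩

theorem card_le_of_isChain_of_block_le_le_blockReach {r s K : ℕ} (hr : 2 ≤ r) (hs : 2 ≤ s)
    (hfree : ¬ ContainsSumOfChains α r s) {c : Finset α} (hc : IsChain (· ≤ ·) (c : Set α))
    (hK : ∀ x ∈ c, block r x ≤ K ∧ K ≤ blockReach r s x) : c.card ≤ r - 1 := by
  by_contra! hcard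
  set M := K * (r - 1) + (r - 2)
  have hM : ∀ x ∈ c, natHeight x ≤ M := fun x hx => by
    have := (Nat.div_lt_iff_lt_mul (by omega)).1 (Nat.lt_succ_of_le (hK x hx).1)
    rw [Nat.succ_mul] at this
    omega
  obtain ⟨x₀, hx₀, hleast, hx₀M⟩ := hc.exists_least_natHeight_add_lt hcard hM
  have hx₀K : block r x₀ < K := (Nat.div_lt_iff_lt_mul (by omega)).2 (by omega)
  obtain ⟨y, hx₀y, hyx₀, hKy⟩ :=
    exists_incomparable_of_block_lt_of_le_blockReach hx₀K (hK x₀ hx₀).2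
  have hMy : M + s ≤ natHeight y + 1 := by
    have hy := (Nat.le_div_iff_mul_le (by omega)).1 hKy
    have hprod : (r - 2) + (s - 1) ≤ (s - 1) * (r - 1) := by
      obtain ⟨R, rfl⟩ : ∃ R, r = R + 2 := ⟨r - 2, by omega⟩
      obtain ⟨S, rfl⟩ : ∃ S, s = S + 2 := ⟨s - 2, by omega⟩
      rw [show R + 2 - 2 = R by omega, show S + 2 - 1 = S + 1 by omega,
        show R + 2 - 1 = R + 1 by omega]
      nlinarith
    rw [add_mul] at hy
    omega
  obtain ⟨B, hB, hBcard, hBy⟩ := exists_isChain_card_eq_of_le_natHeight y (J := M) (by omega)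
  refine hfree (.of_le hc hB (by omega) (by omega) fun a ha b hb => ?_)
  have hab : ¬ a ≤ b := fun hab => hx₀y ((hleast a ha).trans (hab.trans (hBy b hb).1))
  refine ⟨hab, fun hba => ?_⟩
  rcases hba.lt_or_eq with hba | rfl
  · exact (natHeight_strictMono hba).not_ge ((hM a ha).trans (hBy b hb).2)
  · exact hab le_rfl

end ChainSumFree

open ChainSumFree

/-- **Structural lemma for `(𝐫+𝐬)`-free posets.**
Let `r, s ≥ 2` and let `P` (the finite partial order `α`) be `(𝐫+𝐬)`-free.  Then there is a
function `I` assigning to each element `x` a non-empty set of consecutive integers such that: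
(1) for each integer `k`, the set `{x | k ∈ I x}` induces a subposet of height at most `r - 1`
(every chain it contains has size at most `r - 1`); and
(2) if `x` and `y` are incomparable, then either `I x` and `I y` intersect, or at most `s - 2`
integers lie strictly between `I x` and `I y`. -/
theorem exists_interval_function_of_two_long_incomparable_chains_free
    {α : Type*} [PartialOrder α] [Fintype α]
    (r s : ℕ) (hr : 2 ≤ r) (hs : 2 ≤ s)
    -- `P` is `(𝐫 + 𝐬)`-free
    (hfree : ¬ ∃ A B : Finset α, A.card = r ∧ B.card = s ∧ Disjoint A B ∧
      IsChain (· ≤ ·) (A : Set α) ∧ IsChain (· ≤ ·) (B : Set α) ∧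
      ∀ a ∈ A, ∀ b ∈ B, ¬ a ≤ b ∧ ¬ b ≤ a) :
    ∃ I : α → Finset ℤ,
      -- each `I x` is a non-empty set of consecutive integers
      (∀ x, (I x).Nonempty) ∧
      (∀ x, ∃ a b : ℤ, I x = Finset.Icc a b) ∧
      -- (1) for each `k`, the set `{x | k ∈ I x}` has height at most `r - 1`
      (∀ k : ℤ, ∀ c : Finset α, (∀ x ∈ c, k ∈ I x) →
        IsChain (· ≤ ·) (c : Set α) → c.card ≤ r - 1) ∧
      -- (2) incomparable elements have intersecting intervals, or at most `s - 2`
      -- integers strictly between their intervals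
      (∀ x y : α, ¬ x ≤ y → ¬ y ≤ x →
        (I x ∩ I y).Nonempty ∨
        Set.ncard {k : ℤ |
          ((∀ a ∈ I x, a < k) ∧ (∀ b ∈ I y, k < b)) ∨
          ((∀ b ∈ I y, b < k) ∧ (∀ a ∈ I x, k < a))} ≤ s - 2) := by
  refine ⟨fun x => Icc (block r x : ℤ) (blockReach r s x), fun x => ?_, fun x => ⟨_, _, rfl⟩,
    fun k c hk hc => ?_, fun x y hxy hyx => ?_⟩
  · exact nonempty_Icc.2 (mod_cast block_le_blockReach r s x)
  · refine card_le_of_isChain_of_block_le_le_blockReach (K := k.toNat) hr hs hfree hc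
      fun x hx => ?_
    have := mem_Icc.1 (hk x hx)
    omega
  · have hyx' := block_le_blockReach_add_of_incomparable r s hxy hyx
    have hxy' := block_le_blockReach_add_of_incomparable r s hyx hxy
    exact Int.Icc_inter_nonempty_or_ncard_between_le (s - 2)
      (mod_cast block_le_blockReach r s x) (mod_cast block_le_blockReach r s y)
      (by omega) (by omega)
end

section
/- Fix an evolution (S_0,F_0), …, (S_n,F_n) of t-societies with S_n = ∅. Let Y_1, …, Y_q be groups and let [a_1,b_1], …, [a_q,b_q] be pairwise disjoint intervals with integer endpoints contained in [0,n] such that a_j ≤ b_j and, for each j, b_j is the largest index l with Y_j ∈ S_l. Then Σ_{j=1}^q N^α_{a_j,b_j}(Y_j) ≤ ε·n. -/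
open scoped Classical

/-- `X` makes a transition of type α from `S (j-1)` to `S j`:
`X` belongs to `S (j-1)` and has non-empty intersection with the chain `C j`. -/
def TransAlpha {α : Type*} (S : ℕ → Set (Set α)) (C : ℕ → Set α)
    (j : ℕ) (X : Set α) : Prop :=
  X ∈ S (j - 1) ∧ (X ∩ C j).Nonempty

/-- `X` makes a transition of type β from `S (j-1)` to `S j`:
condition α fails, but some friend of `X` in the `t`-society `(S (j-1), F (j-1))`
has non-empty intersection with `C j`. -/
def TransBeta {α : Type*} (S : ℕ → Set (Set α)) (F : ℕ → Set α → ℕ → Option (Set α))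
    (C : ℕ → Set α) (t j : ℕ) (X : Set α) : Prop :=
  X ∈ S (j - 1) ∧ ¬ (X ∩ C j).Nonempty ∧
    ∃ k < t, ∃ Y, F (j - 1) X k = some Y ∧ (Y ∩ C j).Nonempty

/-- `N^α_{i,j}(X)`: the number of indices `l` with `i < l ≤ j` such that `X` makes a
transition of type α from `S (l-1)` to `S l`. -/
noncomputable def NAlpha {α : Type*} (S : ℕ → Set (Set α)) (C : ℕ → Set α)
    (i j : ℕ) (X : Set α) : ℕ :=
  ((Finset.Ioc i j).filter fun l => TransAlpha S C l X).card

/-- `X` makes a transition of type γ from `S (j-1)` to `S j`: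
conditions α and β fail, but there is `i ≤ j - 1` with `N^α_{i,j-1}(X) > ε (j - i)`,
where `ε = 1 / (2 t)`. -/
def TransGamma {α : Type*} (S : ℕ → Set (Set α)) (F : ℕ → Set α → ℕ → Option (Set α))
    (C : ℕ → Set α) (t j : ℕ) (X : Set α) : Prop :=
  X ∈ S (j - 1) ∧ ¬ (X ∩ C j).Nonempty ∧
    ¬ (∃ k < t, ∃ Y, F (j - 1) X k = some Y ∧ (Y ∩ C j).Nonempty) ∧
    ∃ i ≤ j - 1, (NAlpha S C i (j - 1) X : ℝ) > (1 / (2 * (t : ℝ))) * ((j : ℝ) - (i : ℝ))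

/-- `N^β_{i,j}(X)`: the number of indices `l` with `i < l ≤ j` such that `X` makes a
transition of type β from `S (l-1)` to `S l`. -/
noncomputable def NBeta {α : Type*} (S : ℕ → Set (Set α)) (F : ℕ → Set α → ℕ → Option (Set α))
    (C : ℕ → Set α) (t i j : ℕ) (X : Set α) : ℕ :=
  ((Finset.Ioc i j).filter fun l => TransBeta S F C t l X).card

/-- `N^γ_{i,j}(X)`: the number of indices `l` with `i < l ≤ j` such that `X` makes a
transition of type γ from `S (l-1)` to `S l`. -/
noncomputable def NGamma {α : Type*} (S : ℕ → Set (Set α)) (F : ℕ → Set α → ℕ → Option (Set α))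
    (C : ℕ → Set α) (t i j : ℕ) (X : Set α) : ℕ :=
  ((Finset.Ioc i j).filter fun l => TransGamma S F C t l X).card

/-!
A group `Y` that lies in `S b` but not in `S (b + 1)` made no transition at step `b + 1`;
in particular the γ-condition failed for `i = a`, which says exactly
`N^α_{a,b}(Y) ≤ ε (b + 1 - a) = ε · #[a, b]`. Since `S n = ∅`, every `b j` is below `n`, so the
pairwise disjoint intervals `[a j, b j]` all lie in `[0, n)` and their lengths add up to at most `n`.
-/

open Finset

theorem sum_card_Icc_le_of_pairwise_disjoint {ι : Type*} [Fintype ι] {n : ℕ} {a b : ι → ℕ}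
    (hb : ∀ j, b j < n)
    (hdisj : Pairwise fun j₁ j₂ => Disjoint (Icc (a j₁) (b j₁)) (Icc (a j₂) (b j₂))) :
    ∑ j, #(Icc (a j) (b j)) ≤ n := by
  rw [← card_biUnion fun j₁ _ j₂ _ h => hdisj h]
  calc #(univ.biUnion fun j => Icc (a j) (b j))
      ≤ #(range n) := card_le_card fun l hl => by
        simp only [mem_biUnion, mem_univ, true_and, mem_Icc] at hl
        obtain ⟨j, -, hlb⟩ := hl
        exact mem_range.2 (hlb.trans_lt (hb j))
    _ = n := card_range n

theorem NAlpha_le_of_no_transition {α : Type*} {S : ℕ → Set (Set α)}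
    {F : ℕ → Set α → ℕ → Option (Set α)} {C : ℕ → Set α} {t i j : ℕ} {X : Set α}
    (hX : X ∈ S j) (hij : i ≤ j)
    (hnone : ¬ (TransAlpha S C (j + 1) X ∨ TransBeta S F C t (j + 1) X ∨
      TransGamma S F C t (j + 1) X)) :
    (NAlpha S C i j X : ℝ) ≤ 1 / (2 * (t : ℝ)) * #(Icc i j) := by
  by_contra! hlt
  simp only [TransAlpha, TransBeta, TransGamma, Nat.add_sub_cancel] at hnone
  have hγ : ∃ i ≤ j, (NAlpha S C i j X : ℝ) > 1 / (2 * (t : ℝ)) * (((j + 1 : ℕ) : ℝ) - i) := by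
    refine ⟨i, hij, ?_⟩
    rwa [Nat.card_Icc, Nat.cast_sub (by omega)] at hlt
  by_cases hα : (X ∩ C (j + 1)).Nonempty
  · exact hnone (.inl ⟨hX, hα⟩)
  by_cases hβ : ∃ k < t, ∃ Y, F j X k = some Y ∧ (Y ∩ C (j + 1)).Nonempty
  · exact hnone (.inr (.inl ⟨hX, hα, hβ⟩))
  · exact hnone (.inr (.inr ⟨hX, hα, hβ, hγ⟩))

theorem sum_NAlpha_le_eps_mul_general
    {α : Type*}
    (n t : ℕ)
    (S : ℕ → Set (Set α)) (F : ℕ → Set α → ℕ → Option (Set α)) (C : ℕ → Set α)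
    -- a group of `S (j-1)` survives to `S j` iff it makes a transition of type α, β or γ
    (hrule : ∀ j, 1 ≤ j → j ≤ n → ∀ X ∈ S (j - 1),
      (X ∈ S j ↔ TransAlpha S C j X ∨ TransBeta S F C t j X ∨ TransGamma S F C t j X))
    -- the evolution ends with the empty society
    (hSn : S n = ∅)
    -- the groups `Y j` and the intervals `[a j, b j]`
    (q : ℕ) (Y : Fin q → Set α) (a b : Fin q → ℕ)
    (hab : ∀ j, a j ≤ b j) (hbn : ∀ j, b j ≤ n)
    (hIdisj : ∀ j₁ j₂, j₁ ≠ j₂ →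
      Disjoint (Finset.Icc (a j₁) (b j₁)) (Finset.Icc (a j₂) (b j₂)))
    -- `b j` is the largest index `l ∈ [0, n]` with `Y j ∈ S l`
    (hblast : ∀ j, Y j ∈ S (b j) ∧ ∀ l, l ≤ n → Y j ∈ S l → l ≤ b j) :
    (∑ j, (NAlpha S C (a j) (b j) (Y j) : ℝ)) ≤ (1 / (2 * (t : ℝ))) * n := by
  have hbn' : ∀ j, b j < n := fun j =>
    (hbn j).lt_of_ne fun h => by simpa [h, hSn] using (hblast j).1
  have hdies : ∀ j, ¬ (TransAlpha S C (b j + 1) (Y j) ∨ TransBeta S F C t (b j + 1) (Y j) ∨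
      TransGamma S F C t (b j + 1) (Y j)) := fun j htrans => by
    have hY : Y j ∈ S (b j + 1 - 1) := by simpa using (hblast j).1
    have := (hblast j).2 _ (hbn' j) ((hrule _ le_add_self (hbn' j) (Y j) hY).2 htrans)
    omega
  have hlengths : (∑ j, (#(Icc (a j) (b j)) : ℝ)) ≤ n := by
    exact_mod_cast sum_card_Icc_le_of_pairwise_disjoint hbn' fun j₁ j₂ h => hIdisj j₁ j₂ h
  calc (∑ j, (NAlpha S C (a j) (b j) (Y j) : ℝ))
      ≤ ∑ j, 1 / (2 * (t : ℝ)) * #(Icc (a j) (b j)) := sum_le_sum fun j _ =>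
        NAlpha_le_of_no_transition (hblast j).1 (hab j) (hdies j)
    _ = 1 / (2 * (t : ℝ)) * ∑ j, (#(Icc (a j) (b j)) : ℝ) := (mul_sum ..).symm
    _ ≤ 1 / (2 * (t : ℝ)) * n := mul_le_mul_of_nonneg_left hlengths (by positivity)

/-- **Lemma 1 (single column).**  Fix an evolution `(S 0, F 0), …, (S n, F n)` of
`t`-societies with `S n = ∅`.  Let `Y 1, …, Y q` be groups and `[a j, b j]` pairwise
disjoint intervals with integer endpoints in `[0, n]` such that `b j` is the largest
index `l` with `Y j ∈ S l`.  Then `∑ j, N^α_{a j, b j} (Y j) ≤ ε * n`, where `ε = 1/(2t)`. -/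
theorem sum_NAlpha_le_eps_mul
    {α : Type*} [PartialOrder α]
    (n t : ℕ) (ht : 0 < t)
    (S : ℕ → Set (Set α)) (F : ℕ → Set α → ℕ → Option (Set α)) (C : ℕ → Set α)
    -- the `C j` (for `j ≥ 1`) are pairwise disjoint (possibly empty) chains of `P`
    (hCchain : ∀ j, 1 ≤ j → IsChain (· ≤ ·) (C j))
    (hCdisj : ∀ i j, 1 ≤ i → 1 ≤ j → i ≠ j → Disjoint (C i) (C j))
    -- each `S j` is a finite set of groups
    (hSfin : ∀ j, j ≤ n → (S j).Finite)
    -- the societies decrease: `S 0 ⊇ S 1 ⊇ ⋯ ⊇ S n`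
    (hSmono : ∀ j, 1 ≤ j → j ≤ n → S j ⊆ S (j - 1))
    -- each friend of a group of `S j` is a group of `S j`
    (hFmem : ∀ j, j ≤ n → ∀ X ∈ S j, ∀ k < t, ∀ Y, F j X k = some Y → Y ∈ S j)
    -- a group of `S (j-1)` survives to `S j` iff it makes a transition of type α, β or γ
    (hrule : ∀ j, 1 ≤ j → j ≤ n → ∀ X ∈ S (j - 1),
      (X ∈ S j ↔ TransAlpha S C j X ∨ TransBeta S F C t j X ∨ TransGamma S F C t j X))
    -- friendship is a lifetime commitment
    (hlife : ∀ j, 1 ≤ j → j ≤ n → ∀ X Y : Set α, ∀ k < t,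
      F (j - 1) X k = some Y → X ∈ S j → Y ∈ S j → F j X k = some Y)
    -- the evolution ends with the empty society
    (hSn : S n = ∅)
    -- the groups `Y j` and the intervals `[a j, b j]`
    (q : ℕ) (Y : Fin q → Set α) (a b : Fin q → ℕ)
    (hab : ∀ j, a j ≤ b j) (hbn : ∀ j, b j ≤ n)
    (hIdisj : ∀ j₁ j₂, j₁ ≠ j₂ →
      Disjoint (Finset.Icc (a j₁) (b j₁)) (Finset.Icc (a j₂) (b j₂)))
    -- `b j` is the largest index `l ∈ [0, n]` with `Y j ∈ S l`
    (hblast : ∀ j, Y j ∈ S (b j) ∧ ∀ l, l ≤ n → Y j ∈ S l → l ≤ b j) :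
    (∑ j, (NAlpha S C (a j) (b j) (Y j) : ℝ)) ≤ (1 / (2 * (t : ℝ))) * n :=
  sum_NAlpha_le_eps_mul_general n t S F C hrule hSn q Y a b hab hbn hIdisj hblast
end

section
/- Fix an evolution (S_0,F_0), …, (S_n,F_n) of t-societies with n ≥ 1 and S_n = ∅. If X ∈ S_{n−1}, then N^β_{0,n−1}(X) ≤ t·ε·n. -/
open scoped Classical

/-!
Fix a slot `k` of `X`. Each β-transition of `X` through slot `k` at step `l` is charged to the
friend `Y` sitting in that slot: `Y` meets `C l`, so `Y` makes an α-transition at step `l`.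
By lifetime commitment `Y` occupies the slot from its appointment `a Y` until its death `d Y`,
so the tenures `(a Y, d Y]` of the successive friends are disjoint subintervals of `(0, n]`.
Since `Y` dies at `d Y`, it makes no γ-transition there, whence it made at most
`ε (d Y - a Y)` α-transitions during its tenure. Summing over the friends gives `ε n` per slot,
and `t ε n` over all slots.
-/

section FewBetaTransitions

open Finset

section Intervals

variable {β : Type*}

theorem sum_sub_le_of_pairwiseDisjoint_Ioc {n : ℕ} (T : Finset β) (a d : β → ℕ)
    (hd : ∀ Y ∈ T, d Y ≤ n) (hdisj : (T : Set β).PairwiseDisjoint fun Y => Ioc (a Y) (d Y)) :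
    ∑ Y ∈ T, (d Y - a Y) ≤ n :=
  calc ∑ Y ∈ T, (d Y - a Y) = (T.biUnion fun Y => Ioc (a Y) (d Y)).card := by
        simp only [card_biUnion hdisj, Nat.card_Ioc]
    _ ≤ (Ioc 0 n).card := card_le_card fun m hm => by
        obtain ⟨Y, hY, hm⟩ := mem_biUnion.mp hm
        have := hd Y hY
        simp only [mem_Ioc] at hm ⊢
        omega
    _ = n := by simp

theorem pairwiseDisjoint_Ioc_of_eq_some (f : ℕ → Option β) (s : Set β) (a d : β → ℕ)
    (hf : ∀ Y ∈ s, ∀ m, a Y ≤ m → m < d Y → f m = some Y) :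
    s.PairwiseDisjoint fun Y => Ioc (a Y) (d Y) := by
  intro Y hY Y' hY' hne
  refine Finset.disjoint_left.mpr fun m hm hm' => hne ?_
  rw [mem_Ioc] at hm hm'
  exact Option.some_inj.mp <|
    (hf Y hY (m - 1) (by omega) (by omega)).symm.trans (hf Y' hY' (m - 1) (by omega) (by omega))

end Intervals

section DeathTime

variable {β : Type*} {S : ℕ → Set β} {n : ℕ} {Y : β}

theorem mem_of_le_of_mem_of_decreasing (hSmono : ∀ j, 1 ≤ j → j ≤ n → S j ⊆ S (j - 1))
    {i j : ℕ} (hij : i ≤ j) (hjn : j ≤ n) (hY : Y ∈ S j) : Y ∈ S i := by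
  induction j, hij using Nat.le_induction with
  | base => exact hY
  | succ j _ ih => exact ih (by omega) (hSmono (j + 1) (by omega) hjn hY)

noncomputable def deathTime (S : ℕ → Set β) (Y : β) : ℕ :=
  sInf {m | Y ∉ S m}

theorem deathTime_le (hSn : S n = ∅) : deathTime S Y ≤ n :=
  Nat.sInf_le (by simp [hSn])

theorem notMem_deathTime (hSn : S n = ∅) : Y ∉ S (deathTime S Y) :=
  Nat.sInf_mem (s := {m | Y ∉ S m}) ⟨n, by simp [hSn]⟩

theorem mem_of_lt_deathTime {j : ℕ} (hj : j < deathTime S Y) : Y ∈ S j :=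
  not_not.mp (Nat.notMem_of_lt_sInf hj)

theorem lt_deathTime_of_mem (hSmono : ∀ j, 1 ≤ j → j ≤ n → S j ⊆ S (j - 1))
    (hSn : S n = ∅) {j : ℕ} (hjn : j ≤ n) (hY : Y ∈ S j) : j < deathTime S Y := by
  by_contra! h
  exact notMem_deathTime hSn (mem_of_le_of_mem_of_decreasing hSmono h hjn hY)

end DeathTime

variable {α : Type*} {S : ℕ → Set (Set α)} {F : ℕ → Set α → ℕ → Option (Set α)}
  {C : ℕ → Set α} {n t k : ℕ} {X Y : Set α}

noncomputable def friendHits (F : ℕ → Set α → ℕ → Option (Set α)) (C : ℕ → Set α)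
    (X : Set α) (k i j : ℕ) : Finset ℕ :=
  (Ioc i j).filter fun l => ∃ Y, F (l - 1) X k = some Y ∧ (Y ∩ C l).Nonempty

theorem NBeta_le_sum_card_friendHits (i j : ℕ) :
    NBeta S F C t i j X ≤ ∑ k ∈ range t, (friendHits F C X k i j).card := by
  refine (card_le_card fun l hl => ?_).trans card_biUnion_le
  obtain ⟨hl, -, -, k, hk, hhit⟩ := mem_filter.mp hl
  exact mem_biUnion.mpr ⟨k, mem_range.mpr hk, mem_filter.mpr ⟨hl, hhit⟩⟩

theorem NAlpha_le_of_mem_of_notMem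
    (hrule : ∀ j, 1 ≤ j → j ≤ n → ∀ X ∈ S (j - 1),
      (X ∈ S j ↔ TransAlpha S C j X ∨ TransBeta S F C t j X ∨ TransGamma S F C t j X))
    {j : ℕ} (hj : 1 ≤ j) (hjn : j ≤ n) (hY : Y ∈ S (j - 1)) (hY' : Y ∉ S j)
    {i : ℕ} (hi : i ≤ j - 1) :
    (NAlpha S C i (j - 1) Y : ℝ) ≤ 1 / (2 * (t : ℝ)) * ((j : ℝ) - (i : ℝ)) := by
  by_contra! hgt
  refine hY' ((hrule j hj hjn Y hY).mpr ?_)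
  by_cases hα : (Y ∩ C j).Nonempty
  · exact Or.inl ⟨hY, hα⟩
  by_cases hβ : ∃ k < t, ∃ Z, F (j - 1) Y k = some Z ∧ (Z ∩ C j).Nonempty
  · exact Or.inr (Or.inl ⟨hY, hα, hβ⟩)
  · exact Or.inr (Or.inr ⟨hY, hα, hβ, i, hi, hgt⟩)

theorem transAlpha_of_friend_meets
    (hFmem : ∀ j, j ≤ n → ∀ X ∈ S j, ∀ k < t, ∀ Y, F j X k = some Y → Y ∈ S j)
    (hrule : ∀ j, 1 ≤ j → j ≤ n → ∀ X ∈ S (j - 1),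
      (X ∈ S j ↔ TransAlpha S C j X ∨ TransBeta S F C t j X ∨ TransGamma S F C t j X))
    (hk : k < t) {l : ℕ} (hl : 1 ≤ l) (hln : l ≤ n) (hX : X ∈ S (l - 1))
    (hF : F (l - 1) X k = some Y) (hYC : (Y ∩ C l).Nonempty) :
    TransAlpha S C l Y ∧ Y ∈ S l := by
  have hY : TransAlpha S C l Y := ⟨hFmem (l - 1) (by omega) X hX k hk Y hF, hYC⟩
  exact ⟨hY, (hrule l hl hln Y hY.1).mpr (Or.inl hY)⟩

theorem friend_eq_of_le
    (hlife : ∀ j, 1 ≤ j → j ≤ n → ∀ X Y : Set α, ∀ k < t,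
      F (j - 1) X k = some Y → X ∈ S j → Y ∈ S j → F j X k = some Y)
    (hk : k < t) {i j : ℕ} (hF : F i X k = some Y) (hij : i ≤ j) (hjn : j ≤ n)
    (hmem : ∀ m, i < m → m ≤ j → X ∈ S m ∧ Y ∈ S m) : F j X k = some Y := by
  induction j, hij using Nat.le_induction with
  | base => exact hF
  | succ j hij ih =>
    obtain ⟨hX, hY⟩ := hmem (j + 1) (by omega) le_rfl
    exact hlife (j + 1) (by omega) hjn X Y k hk (ih (by omega) fun m h h' => hmem m h (by omega))
      hX hY

noncomputable def appointTime (F : ℕ → Set α → ℕ → Option (Set α)) (X : Set α)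
    (k : ℕ) (Y : Set α) : ℕ :=
  sInf {j | F j X k = some Y}

theorem appointTime_le {j : ℕ} (h : F j X k = some Y) : appointTime F X k Y ≤ j :=
  Nat.sInf_le h

theorem friend_eq_of_mem_tenure
    (hSmono : ∀ j, 1 ≤ j → j ≤ n → S j ⊆ S (j - 1))
    (hlife : ∀ j, 1 ≤ j → j ≤ n → ∀ X Y : Set α, ∀ k < t,
      F (j - 1) X k = some Y → X ∈ S j → Y ∈ S j → F j X k = some Y)
    (hSn : S n = ∅) (hk : k < t) (hX : X ∈ S (n - 1)) (hY : ∃ j, F j X k = some Y)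
    {m : ℕ} (ham : appointTime F X k Y ≤ m) (hmd : m < deathTime S Y) :
    F m X k = some Y := by
  have hdn : deathTime S Y ≤ n := deathTime_le hSn
  refine friend_eq_of_le hlife hk (Nat.sInf_mem hY) ham (by omega) fun j _ hj =>
    ⟨mem_of_le_of_mem_of_decreasing hSmono (by omega) (by omega) hX,
      mem_of_lt_deathTime (by omega)⟩

theorem exists_friend_of_mem_friendHits
    (hSmono : ∀ j, 1 ≤ j → j ≤ n → S j ⊆ S (j - 1))
    (hFmem : ∀ j, j ≤ n → ∀ X ∈ S j, ∀ k < t, ∀ Y, F j X k = some Y → Y ∈ S j)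
    (hrule : ∀ j, 1 ≤ j → j ≤ n → ∀ X ∈ S (j - 1),
      (X ∈ S j ↔ TransAlpha S C j X ∨ TransBeta S F C t j X ∨ TransGamma S F C t j X))
    (hSn : S n = ∅) (hk : k < t) (hX : X ∈ S (n - 1)) {l : ℕ}
    (hl : l ∈ friendHits F C X k 0 (n - 1)) :
    ∃ Y, F (l - 1) X k = some Y ∧ TransAlpha S C l Y ∧
      appointTime F X k Y < l ∧ l < deathTime S Y := by
  obtain ⟨hl, Y, hF, hYC⟩ := mem_filter.mp hl
  rw [mem_Ioc] at hl
  obtain ⟨hα, hY⟩ := transAlpha_of_friend_meets hFmem hrule hk (l := l) (by omega) (by omega)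
    (mem_of_le_of_mem_of_decreasing hSmono (by omega) (by omega) hX) hF hYC
  exact ⟨Y, hF, hα, by have := appointTime_le hF; omega,
    lt_deathTime_of_mem hSmono hSn (by omega) hY⟩

theorem card_friendHits_le
    (hSmono : ∀ j, 1 ≤ j → j ≤ n → S j ⊆ S (j - 1))
    (hFmem : ∀ j, j ≤ n → ∀ X ∈ S j, ∀ k < t, ∀ Y, F j X k = some Y → Y ∈ S j)
    (hrule : ∀ j, 1 ≤ j → j ≤ n → ∀ X ∈ S (j - 1),
      (X ∈ S j ↔ TransAlpha S C j X ∨ TransBeta S F C t j X ∨ TransGamma S F C t j X))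
    (hlife : ∀ j, 1 ≤ j → j ≤ n → ∀ X Y : Set α, ∀ k < t,
      F (j - 1) X k = some Y → X ∈ S j → Y ∈ S j → F j X k = some Y)
    (hSn : S n = ∅) (hk : k < t) (hX : X ∈ S (n - 1)) :
    ((friendHits F C X k 0 (n - 1)).card : ℝ) ≤ 1 / (2 * (t : ℝ)) * n := by
  set B := friendHits F C X k 0 (n - 1)
  set T := B.image fun l => (F (l - 1) X k).getD ∅
  have hhit l (hl : l ∈ B) := exists_friend_of_mem_friendHits hSmono hFmem hrule hSn hk hX hl
  have hT : ∀ Y ∈ T, (∃ j, F j X k = some Y) ∧ appointTime F X k Y < deathTime S Y := by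
    intro Y hY
    obtain ⟨l, hl, rfl⟩ := mem_image.mp hY
    obtain ⟨Y, hF, -, hal, hld⟩ := hhit l hl
    simp only [hF, Option.getD_some]
    exact ⟨⟨l - 1, hF⟩, by omega⟩
  have hcover : B ⊆ T.biUnion fun Y =>
      (Ioc (appointTime F X k Y) (deathTime S Y - 1)).filter (TransAlpha S C · Y) := by
    intro l hl
    obtain ⟨Y, hF, hα, hal, hld⟩ := hhit l hl
    exact mem_biUnion.mpr ⟨Y, mem_image.mpr ⟨l, hl, by simp [hF]⟩,
      mem_filter.mpr ⟨mem_Ioc.mpr ⟨hal, by omega⟩, hα⟩⟩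
  have hpack : ∑ Y ∈ T, (deathTime S Y - appointTime F X k Y) ≤ n :=
    sum_sub_le_of_pairwiseDisjoint_Ioc T (appointTime F X k) (deathTime S)
      (fun _ _ => deathTime_le hSn) <|
      pairwiseDisjoint_Ioc_of_eq_some (F · X k) T (appointTime F X k) (deathTime S) fun Y hY _ =>
        friend_eq_of_mem_tenure hSmono hlife hSn hk hX (hT Y hY).1
  calc (B.card : ℝ)
      ≤ ∑ Y ∈ T, (NAlpha S C (appointTime F X k Y) (deathTime S Y - 1) Y : ℝ) := by
        exact_mod_cast (card_le_card hcover).trans card_biUnion_le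
    _ ≤ ∑ Y ∈ T, 1 / (2 * (t : ℝ)) * ((deathTime S Y : ℝ) - appointTime F X k Y) := by
        refine sum_le_sum fun Y hY => ?_
        have had := (hT Y hY).2
        have hdn : deathTime S Y ≤ n := deathTime_le hSn
        exact NAlpha_le_of_mem_of_notMem hrule (by omega) hdn
          (mem_of_lt_deathTime (by omega)) (notMem_deathTime hSn) (by omega)
    _ = 1 / (2 * (t : ℝ)) * ↑(∑ Y ∈ T, (deathTime S Y - appointTime F X k Y)) := by
        rw [Nat.cast_sum, mul_sum]
        exact sum_congr rfl fun Y hY => by rw [Nat.cast_sub (hT Y hY).2.le]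
    _ ≤ 1 / (2 * (t : ℝ)) * n := by gcongr

end FewBetaTransitions

theorem NBeta_le_of_mem_penultimate_general
    {α : Type*}
    (n t : ℕ)
    (S : ℕ → Set (Set α)) (F : ℕ → Set α → ℕ → Option (Set α)) (C : ℕ → Set α)
    -- the societies decrease: `S 0 ⊇ S 1 ⊇ ⋯ ⊇ S n`
    (hSmono : ∀ j, 1 ≤ j → j ≤ n → S j ⊆ S (j - 1))
    -- each friend of a group of `S j` is a group of `S j`
    (hFmem : ∀ j, j ≤ n → ∀ X ∈ S j, ∀ k < t, ∀ Y, F j X k = some Y → Y ∈ S j)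
    -- a group of `S (j-1)` survives to `S j` iff it makes a transition of type α, β or γ
    (hrule : ∀ j, 1 ≤ j → j ≤ n → ∀ X ∈ S (j - 1),
      (X ∈ S j ↔ TransAlpha S C j X ∨ TransBeta S F C t j X ∨ TransGamma S F C t j X))
    -- friendship is a lifetime commitment
    (hlife : ∀ j, 1 ≤ j → j ≤ n → ∀ X Y : Set α, ∀ k < t,
      F (j - 1) X k = some Y → X ∈ S j → Y ∈ S j → F j X k = some Y)
    -- the evolution ends with the empty society
    (hSn : S n = ∅)
    (X : Set α) (hX : X ∈ S (n - 1)) :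
    (NBeta S F C t 0 (n - 1) X : ℝ) ≤ (t : ℝ) * (1 / (2 * (t : ℝ))) * n := by
  calc (NBeta S F C t 0 (n - 1) X : ℝ)
      ≤ ∑ k ∈ Finset.range t, ((friendHits F C X k 0 (n - 1)).card : ℝ) := by
        exact_mod_cast NBeta_le_sum_card_friendHits 0 (n - 1)
    _ ≤ ∑ _k ∈ Finset.range t, 1 / (2 * (t : ℝ)) * n := Finset.sum_le_sum fun k hk =>
        card_friendHits_le hSmono hFmem hrule hlife hSn (Finset.mem_range.mp hk) hX
    _ = (t : ℝ) * (1 / (2 * (t : ℝ))) * n := by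
        rw [Finset.sum_const, Finset.card_range, nsmul_eq_mul, mul_assoc]

/-- **Lemma 2 (few β-transitions).**  Fix an evolution `(S 0, F 0), …, (S n, F n)` of
`t`-societies with `n ≥ 1` and `S n = ∅`.  If `X ∈ S (n-1)`, then
`N^β_{0,n-1}(X) ≤ t * ε * n`, where `ε = 1/(2t)`. -/
theorem NBeta_le_of_mem_penultimate
    {α : Type*} [PartialOrder α]
    (n t : ℕ) (hn : 1 ≤ n) (ht : 0 < t)
    (S : ℕ → Set (Set α)) (F : ℕ → Set α → ℕ → Option (Set α)) (C : ℕ → Set α)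
    -- the `C j` (for `j ≥ 1`) are pairwise disjoint (possibly empty) chains of `P`
    (hCchain : ∀ j, 1 ≤ j → IsChain (· ≤ ·) (C j))
    (hCdisj : ∀ i j, 1 ≤ i → 1 ≤ j → i ≠ j → Disjoint (C i) (C j))
    -- each `S j` is a finite set of groups
    (hSfin : ∀ j, j ≤ n → (S j).Finite)
    -- the societies decrease: `S 0 ⊇ S 1 ⊇ ⋯ ⊇ S n`
    (hSmono : ∀ j, 1 ≤ j → j ≤ n → S j ⊆ S (j - 1))
    -- each friend of a group of `S j` is a group of `S j`
    (hFmem : ∀ j, j ≤ n → ∀ X ∈ S j, ∀ k < t, ∀ Y, F j X k = some Y → Y ∈ S j)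
    -- a group of `S (j-1)` survives to `S j` iff it makes a transition of type α, β or γ
    (hrule : ∀ j, 1 ≤ j → j ≤ n → ∀ X ∈ S (j - 1),
      (X ∈ S j ↔ TransAlpha S C j X ∨ TransBeta S F C t j X ∨ TransGamma S F C t j X))
    -- friendship is a lifetime commitment
    (hlife : ∀ j, 1 ≤ j → j ≤ n → ∀ X Y : Set α, ∀ k < t,
      F (j - 1) X k = some Y → X ∈ S j → Y ∈ S j → F j X k = some Y)
    -- the evolution ends with the empty society
    (hSn : S n = ∅)
    (X : Set α) (hX : X ∈ S (n - 1)) :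
    (NBeta S F C t 0 (n - 1) X : ℝ) ≤ (t : ℝ) * (1 / (2 * (t : ℝ))) * n :=
  NBeta_le_of_mem_penultimate_general n t S F C hSmono hFmem hrule hlife hSn X hX
end

section
/- Fix an evolution (S_0,F_0), …, (S_n,F_n) of t-societies. For every group X and every index j with 0 ≤ j ≤ n and X ∈ S_j, we have N^α_{0,j}(X) ≥ ε·(N^α_{0,j}(X) + N^γ_{0,j}(X)). -/
open scoped Classical

/-!
Every step of the life of `X` is of exactly one of the types α, β, γ. By strong induction on
`m`, `ε (m - N^β_{0,m}) ≤ N^α_{0,m}`: an α-step raises the right side by one and the left side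
by at most `ε ≤ 1`, a β-step leaves the left side unchanged and does not decrease the right one,
and a γ-step `m` comes with some `i < m` such that `N^α_{i,m-1} > ε (m - i)`; adding this to the
bound at `i` gives the bound at `m`. Finally `N^α_{0,m} + N^γ_{0,m} ≤ m - N^β_{0,m}`.
-/

open Finset

-- `NAlpha`, `NBeta` and `NGamma` unfold to `countIoc` of the transition predicates.
noncomputable def countIoc (p : ℕ → Prop) (i j : ℕ) : ℕ := #{l ∈ Ioc i j | p l}

section countIoc

variable (p : ℕ → Prop)

lemma countIoc_add {i j k : ℕ} (hij : i ≤ j) (hjk : j ≤ k) :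
    countIoc p i j + countIoc p j k = countIoc p i k := by
  simp only [countIoc, card_filter]
  exact sum_Ioc_consecutive _ hij hjk

lemma countIoc_succ {i j : ℕ} (hij : i ≤ j) :
    countIoc p i (j + 1) = countIoc p i j + if p (j + 1) then 1 else 0 := by
  simp only [countIoc, card_filter]
  exact sum_Ioc_succ_top hij _

lemma countIoc_mono {i j k : ℕ} (hjk : j ≤ k) : countIoc p i j ≤ countIoc p i k :=
  card_le_card (filter_subset_filter _ (Ioc_subset_Ioc_right hjk))

end countIoc

lemma countIoc_add_add_le {p q r : ℕ → Prop} (i j : ℕ)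
    (hpq : ∀ l, p l → ¬ q l) (hpr : ∀ l, p l → ¬ r l) (hqr : ∀ l, q l → ¬ r l) :
    countIoc p i j + countIoc q i j + countIoc r i j ≤ j - i := by
  simp only [countIoc, card_filter, ← sum_add_distrib]
  calc _ ≤ ∑ _ ∈ Ioc i j, 1 := sum_le_sum fun l _ => by
          by_cases hp : p l <;> by_cases hq : q l <;> by_cases hr : r l <;> simp_all
    _ = j - i := by simp

section stepTypes

variable {p q r : ℕ → Prop} {ε : ℝ}

theorem mul_sub_countIoc_le_countIoc (hε0 : 0 ≤ ε) (hε1 : ε ≤ 1) {j : ℕ}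
    (hstep : ∀ l < j,
      p (l + 1) ∨ q (l + 1) ∨ ∃ i ≤ l, ε * (l + 1 - i) < countIoc p i l) :
    ε * (j - countIoc q 0 j) ≤ countIoc p 0 j := by
  induction j using Nat.strong_induction_on with
  | _ j ih =>
  cases j with
  | zero => simp [countIoc]
  | succ m =>
  have ih' (i : ℕ) (hi : i ≤ m) : ε * (i - countIoc q 0 i) ≤ countIoc p 0 i :=
    ih i (by omega) fun l hl => hstep l (by omega)
  have hq_mono (i : ℕ) (hi : i ≤ m) : (countIoc q 0 i : ℝ) ≤ countIoc q 0 (m + 1) := by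
    exact_mod_cast countIoc_mono q (by omega)
  push_cast
  rcases hstep m m.lt_succ_self with hp | hq | ⟨i, hi, hgap⟩
  · have hsucc : countIoc p 0 (m + 1) = countIoc p 0 m + 1 := by
      simp [countIoc_succ p m.zero_le, hp]
    calc ε * (m + 1 - countIoc q 0 (m + 1))
        ≤ ε * (m - countIoc q 0 m) + ε := by nlinarith [hq_mono m le_rfl]
      _ ≤ countIoc p 0 m + 1 := add_le_add (ih' m le_rfl) hε1
      _ = countIoc p 0 (m + 1) := by rw [hsucc]; push_cast; rfl
  · have hsucc : countIoc q 0 (m + 1) = countIoc q 0 m + 1 := by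
      simp [countIoc_succ q m.zero_le, hq]
    calc ε * (m + 1 - countIoc q 0 (m + 1))
        = ε * (m - countIoc q 0 m) := by rw [hsucc]; push_cast; ring
      _ ≤ countIoc p 0 m := ih' m le_rfl
      _ ≤ countIoc p 0 (m + 1) := by exact_mod_cast countIoc_mono p m.le_succ
  · have hsplit : countIoc p 0 i + countIoc p i m ≤ countIoc p 0 (m + 1) := by
      rw [← countIoc_add p i.zero_le (by omega : i ≤ m + 1)]
      exact Nat.add_le_add_left (countIoc_mono p m.le_succ) _
    calc ε * (m + 1 - countIoc q 0 (m + 1))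
        ≤ ε * (i - countIoc q 0 i) + ε * (m + 1 - i) := by nlinarith [hq_mono i hi]
      _ ≤ countIoc p 0 i + countIoc p i m := add_le_add (ih' i hi) hgap.le
      _ ≤ countIoc p 0 (m + 1) := by exact_mod_cast hsplit

theorem mul_countIoc_add_le_countIoc (hε0 : 0 ≤ ε) (hε1 : ε ≤ 1) {j : ℕ}
    (hstep : ∀ l < j, p (l + 1) ∨ q (l + 1) ∨ r (l + 1))
    (hr : ∀ l < j, r (l + 1) → ∃ i ≤ l, ε * (l + 1 - i) < countIoc p i l)
    (hpq : ∀ l, p l → ¬ q l) (hpr : ∀ l, p l → ¬ r l) (hqr : ∀ l, q l → ¬ r l) :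
    ε * (countIoc p 0 j + countIoc r 0 j) ≤ countIoc p 0 j := by
  have hbound := mul_sub_countIoc_le_countIoc (q := q) hε0 hε1 fun l hl =>
    (hstep l hl).imp_right (Or.imp_right (hr l hl))
  have hdisj : (countIoc p 0 j + countIoc q 0 j + countIoc r 0 j : ℝ) ≤ j := by
    exact_mod_cast countIoc_add_add_le 0 j hpq hpr hqr
  nlinarith

end stepTypes

lemma mem_of_le_of_subset_pred {β : Type*} {S : ℕ → Set β} {n : ℕ}
    (hS : ∀ j, 1 ≤ j → j ≤ n → S j ⊆ S (j - 1)) {x : β} {i j : ℕ} (hij : i ≤ j)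
    (hjn : j ≤ n) (hx : x ∈ S j) : x ∈ S i := by
  induction j, hij using Nat.le_induction with
  | base => exact hx
  | succ j hij ih => exact ih (by omega) (hS (j + 1) (by omega) hjn hx)

lemma TransGamma.exists_lt_NAlpha {α : Type*} {S : ℕ → Set (Set α)}
    {F : ℕ → Set α → ℕ → Option (Set α)} {C : ℕ → Set α} {t l : ℕ} {X : Set α}
    (h : TransGamma S F C t (l + 1) X) :
    ∃ i ≤ l, 1 / (2 * (t : ℝ)) * (l + 1 - i) < NAlpha S C i l X := by
  obtain ⟨-, -, -, i, hi, hgap⟩ := h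
  exact ⟨i, hi, by simpa using hgap⟩

theorem NAlpha_ge_eps_mul_add_NGamma_general
    {α : Type*}
    (n t : ℕ)
    (S : ℕ → Set (Set α)) (F : ℕ → Set α → ℕ → Option (Set α)) (C : ℕ → Set α)
    -- the societies decrease: `S 0 ⊇ S 1 ⊇ ⋯ ⊇ S n`
    (hSmono : ∀ j, 1 ≤ j → j ≤ n → S j ⊆ S (j - 1))
    -- a group of `S (j-1)` survives to `S j` iff it makes a transition of type α, β or γ
    (hrule : ∀ j, 1 ≤ j → j ≤ n → ∀ X ∈ S (j - 1),
      (X ∈ S j ↔ TransAlpha S C j X ∨ TransBeta S F C t j X ∨ TransGamma S F C t j X))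
    (X : Set α) (j : ℕ) (hj : j ≤ n) (hX : X ∈ S j) :
    (NAlpha S C 0 j X : ℝ) ≥
      (1 / (2 * (t : ℝ))) * ((NAlpha S C 0 j X : ℝ) + (NGamma S F C t 0 j X : ℝ)) := by
  have hmem (l : ℕ) (hl : l ≤ j) : X ∈ S l := mem_of_le_of_subset_pred hSmono hl hj hX
  have hstep (l : ℕ) (hl : l < j) :
      TransAlpha S C (l + 1) X ∨ TransBeta S F C t (l + 1) X ∨ TransGamma S F C t (l + 1) X :=
    (hrule (l + 1) l.succ_pos (by omega) X (hmem l hl.le)).1 (hmem (l + 1) hl)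
  have hε1 : 1 / (2 * (t : ℝ)) ≤ 1 := by
    simpa using Nat.cast_inv_le_one (α := ℝ) (2 * t)
  exact mul_countIoc_add_le_countIoc (q := fun l => TransBeta S F C t l X) (by positivity) hε1
    hstep (fun _ _ h => h.exists_lt_NAlpha) (fun _ hα hβ => hβ.2.1 hα.2)
    (fun _ hα hγ => hγ.2.1 hα.2) (fun _ hβ hγ => hγ.2.2.1 hβ.2.2)

/-- **Lemma 3 (many α-transitions).**  Fix an evolution `(S 0, F 0), …, (S n, F n)` of
`t`-societies.  For every group `X` and every `j ≤ n` with `X ∈ S j`, we have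
`N^α_{0,j}(X) ≥ ε * (N^α_{0,j}(X) + N^γ_{0,j}(X))`, where `ε = 1/(2t)`. -/
theorem NAlpha_ge_eps_mul_add_NGamma
    {α : Type*} [PartialOrder α]
    (n t : ℕ) (ht : 0 < t)
    (S : ℕ → Set (Set α)) (F : ℕ → Set α → ℕ → Option (Set α)) (C : ℕ → Set α)
    -- the `C j` (for `j ≥ 1`) are pairwise disjoint (possibly empty) chains of `P`
    (hCchain : ∀ j, 1 ≤ j → IsChain (· ≤ ·) (C j))
    (hCdisj : ∀ i j, 1 ≤ i → 1 ≤ j → i ≠ j → Disjoint (C i) (C j))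
    -- each `S j` is a finite set of groups
    (hSfin : ∀ j, j ≤ n → (S j).Finite)
    -- the societies decrease: `S 0 ⊇ S 1 ⊇ ⋯ ⊇ S n`
    (hSmono : ∀ j, 1 ≤ j → j ≤ n → S j ⊆ S (j - 1))
    -- each friend of a group of `S j` is a group of `S j`
    (hFmem : ∀ j, j ≤ n → ∀ X ∈ S j, ∀ k < t, ∀ Y, F j X k = some Y → Y ∈ S j)
    -- a group of `S (j-1)` survives to `S j` iff it makes a transition of type α, β or γ
    (hrule : ∀ j, 1 ≤ j → j ≤ n → ∀ X ∈ S (j - 1),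
      (X ∈ S j ↔ TransAlpha S C j X ∨ TransBeta S F C t j X ∨ TransGamma S F C t j X))
    -- friendship is a lifetime commitment
    (hlife : ∀ j, 1 ≤ j → j ≤ n → ∀ X Y : Set α, ∀ k < t,
      F (j - 1) X k = some Y → X ∈ S j → Y ∈ S j → F j X k = some Y)
    (X : Set α) (j : ℕ) (hj : j ≤ n) (hX : X ∈ S j) :
    (NAlpha S C 0 j X : ℝ) ≥
      (1 / (2 * (t : ℝ))) * ((NAlpha S C 0 j X : ℝ) + (NGamma S F C t 0 j X : ℝ)) :=
  NAlpha_ge_eps_mul_add_NGamma_general n t S F C hSmono hrule X j hj hX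
end

section
/- Let P be a finite poset and let x and y be incomparable elements of P. Let i, j, r be integers with r ≥ 1 and j > i ≥ 0, suppose x = x_1 < x_2 < ⋯ < x_r is a chain in P with h(x_r) = i + 1, suppose h(y) = j, and suppose y_1 < y_2 < ⋯ < y_j = y is a chain in P with h(y_k) = k for each k ∈ {1,…,j}. Then every element of X = {x_1,…,x_r} is incomparable to every element of Y = {y_{i+1},…,y_j}; in particular, X and Y are disjoint chains of sizes r and j − i respectively such that every element of X is incomparable to every element of Y. -/
/-!
Heights strictly increase along `<`, since a chain ending at `a` extends by any `b > a`. Every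
`x_a` lies above `x` and every `y_b` below `y`, so `x_a ≤ y_b` or `x_a = y_b` would give `x ≤ y`;
and `y_b < x_a` is impossible for `b ≥ i`, because `h (x_a) ≤ h (x_r) = i + 1 ≤ b + 1 = h (y_b)`.
-/

/-- The height of `z` is the greatest element of this set. -/
def chainHeights {α : Type*} [Preorder α] (z : α) : Set ℕ :=
  {k | ∃ c : Finset α, c.card = k ∧ IsChain (· ≤ ·) (c : Set α) ∧ z ∈ c ∧ ∀ w ∈ c, w ≤ z}

section Height

variable {α : Type*}

theorem succ_mem_chainHeights_of_lt [Preorder α] [DecidableEq α] {a b : α} {k : ℕ}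
    (hk : k ∈ chainHeights a) (hab : a < b) : k + 1 ∈ chainHeights b := by
  obtain ⟨c, rfl, hchain, -, hle⟩ := hk
  have hb : b ∉ c := fun hb => (hle b hb).not_gt hab
  refine ⟨insert b c, Finset.card_insert_of_notMem hb, ?_, Finset.mem_insert_self b c, ?_⟩
  · rw [Finset.coe_insert]
    exact hchain.insert fun w hw _ => Or.inr ((hle w hw).trans hab.le)
  · intro w hw
    rcases Finset.mem_insert.mp hw with rfl | hw
    exacts [le_rfl, (hle w hw).trans hab.le]

theorem strictMono_of_isGreatest_chainHeights [Preorder α] {h : α → ℕ}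
    (hh : ∀ z, IsGreatest (chainHeights z) (h z)) : StrictMono h := by
  classical
  exact fun a b hab => (hh b).2 (succ_mem_chainHeights_of_lt (hh a).1 hab)

theorem incomparable_of_height_le [PartialOrder α] {h : α → ℕ} (hh : StrictMono h)
    {x y a b : α} (hxy : ¬ x ≤ y) (hxa : x ≤ a) (hby : b ≤ y) (hab : h a ≤ h b) :
    ¬ a ≤ b ∧ ¬ b ≤ a := by
  refine ⟨fun hle => hxy (hxa.trans (hle.trans hby)), fun hle => ?_⟩
  rcases hle.eq_or_lt with rfl | hlt
  · exact hxy (hxa.trans hby)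
  · exact hab.not_gt (hh hlt)

end Height

theorem Fin.card_filter_le_val (i j : ℕ) :
    (Finset.univ.filter fun b : Fin j => i ≤ (b : ℕ)).card = j - i := by
  have hIco : (Finset.univ.filter fun b : Fin j => i ≤ (b : ℕ)).map Fin.valEmbedding =
      Finset.Ico i j := by
    ext n
    simp only [Finset.mem_map, Finset.mem_filter, Finset.mem_univ, true_and,
      Fin.valEmbedding_apply, Finset.mem_Ico]
    exact ⟨by rintro ⟨b, hb, rfl⟩; exact ⟨hb, b.isLt⟩, fun ⟨hin, hnj⟩ => ⟨⟨n, hnj⟩, hin, rfl⟩⟩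
  rw [← Finset.card_map Fin.valEmbedding, hIco, Nat.card_Ico]

/-- Let `P` (the finite partial order `α`) be a finite poset with height function `h`
(`h z` is the maximum size of a chain with maximum element `z`), and let `x` and `y` be
incomparable.  Let `i, j, r` be integers with `r ≥ 1` and `j > i ≥ 0`, let
`x = x₁ < x₂ < ⋯ < x_r` be a chain with `h (x_r) = i + 1`, suppose `h y = j`, and let
`y₁ < y₂ < ⋯ < y_j = y` be a chain with `h (y_k) = k` for each `k ∈ {1, …, j}`.
Then every element of `X = {x₁, …, x_r}` is incomparable to every element of
`Y = {y_{i+1}, …, y_j}`; in particular, `X` and `Y` are disjoint chains of sizes `r`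
and `j - i` respectively such that every element of `X` is incomparable to every
element of `Y`. -/
theorem incomparable_chains_of_heights
    {α : Type*} [PartialOrder α] [DecidableEq α]
    -- `h` is the height function of `P`
    (h : α → ℕ)
    (hh : ∀ z : α, IsGreatest {k | ∃ c : Finset α, c.card = k ∧
      IsChain (· ≤ ·) (c : Set α) ∧ z ∈ c ∧ ∀ w ∈ c, w ≤ z} (h z))
    -- `x` and `y` are incomparable
    (x y : α) (hxy : ¬ x ≤ y)
    (i j r : ℕ) (hr : 1 ≤ r) (hij : i < j)
    -- the chain `x = x₁ < x₂ < ⋯ < x_r` with `h (x_r) = i + 1`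
    (xc : Fin r → α) (hxc : StrictMono xc)
    (hx1 : xc ⟨0, by omega⟩ = x)
    (hxr : h (xc ⟨r - 1, by omega⟩) = i + 1)
    -- `h y = j` and the chain `y₁ < y₂ < ⋯ < y_j = y` with `h (y_k) = k`
    (yc : Fin j → α) (hyc : StrictMono yc)
    (hyj : yc ⟨j - 1, by omega⟩ = y)
    (hyk : ∀ k : Fin j, h (yc k) = (k : ℕ) + 1) :
    -- every element of `X` is incomparable to every element of `Y`
    (∀ (a : Fin r) (b : Fin j), i ≤ (b : ℕ) → ¬ xc a ≤ yc b ∧ ¬ yc b ≤ xc a) ∧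
    -- in particular, `X` and `Y` are disjoint chains of sizes `r` and `j - i`
    Disjoint (Finset.univ.image xc)
      ((Finset.univ.filter fun b : Fin j => i ≤ (b : ℕ)).image yc) ∧
    (Finset.univ.image xc).card = r ∧
    ((Finset.univ.filter fun b : Fin j => i ≤ (b : ℕ)).image yc).card = j - i ∧
    IsChain (· ≤ ·) ((Finset.univ.image xc : Finset α) : Set α) ∧
    IsChain (· ≤ ·)
      ((((Finset.univ.filter fun b : Fin j => i ≤ (b : ℕ)).image yc : Finset α)) : Set α) := by
  have hmono := strictMono_of_isGreatest_chainHeights hh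
  have incomp (a : Fin r) (b : Fin j) (hib : i ≤ (b : ℕ)) : ¬ xc a ≤ yc b ∧ ¬ yc b ≤ xc a := by
    refine incomparable_of_height_le hmono hxy (hx1 ▸ hxc.monotone (Nat.zero_le _))
      (hyj ▸ hyc.monotone (by omega : (b : ℕ) ≤ j - 1)) ?_
    calc h (xc a) ≤ h (xc ⟨r - 1, by omega⟩) :=
          hmono.monotone (hxc.monotone (by omega : (a : ℕ) ≤ r - 1))
      _ = i + 1 := hxr
      _ ≤ h (yc b) := by rw [hyk b]; omega
  refine ⟨incomp, Finset.disjoint_left.2 fun z hzx hzy => ?_,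
    by rw [Finset.card_image_of_injective _ hxc.injective, Finset.card_univ, Fintype.card_fin],
    by rw [Finset.card_image_of_injective _ hyc.injective, Fin.card_filter_le_val], ?_, ?_⟩
  · obtain ⟨a, -, rfl⟩ := Finset.mem_image.1 hzx
    obtain ⟨b, hb, hba⟩ := Finset.mem_image.1 hzy
    exact (incomp a b (Finset.mem_filter.1 hb).2).1 hba.ge
  · rw [Finset.coe_image]
    exact hxc.monotone.isChain_image (isChain_of_trichotomous _)
  · rw [Finset.coe_image]
    exact hyc.monotone.isChain_image (isChain_of_trichotomous _)
end

section
/- Let r ≥ 2 be an integer and let P be a finite poset of height q. For x ∈ P, let Z(x) be the set of elements z such that P contains a chain of size r with minimum element x and maximum element z; let b(x) = min{ h(z) : z ∈ Z(x) } if Z(x) ≠ ∅ and b(x) = q + 1 otherwise; and let I(x) = {h(x), h(x)+1, …, b(x) − 1}. Then for every x ∈ P the set I(x) is non-empty (i.e., h(x) ≤ b(x) − 1), and for every integer k the set {x ∈ P : k ∈ I(x)} has height at most r − 1. -/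
/-!
Gluing a longest chain ending at `x` to an `r`-chain from `x` to `z` gives `h z ≥ h x + r - 1`,
so `b x > h x` as `r ≥ 2` (and `h x ≤ q < b x` when `Z x = ∅`). Conversely, an `r`-chain with
bottom `x` and top `z` inside the level of `k` would give `b x ≤ h z ≤ k ≤ b x - 1`.
-/

namespace Finset

variable {α : Type*} [Preorder α] {s : Finset α}

lemma exists_isGreatest_of_isChain (hs : IsChain (· ≤ ·) (s : Set α)) (hne : s.Nonempty) :
    ∃ z, IsGreatest (s : Set α) z := by
  obtain ⟨z, hz⟩ := s.exists_maximal hne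
  exact ⟨z, hz.1, fun w hw => (hs.total hw hz.1).elim id (hz.2 hw)⟩

lemma exists_isLeast_of_isChain (hs : IsChain (· ≤ ·) (s : Set α)) (hne : s.Nonempty) :
    ∃ x, IsLeast (s : Set α) x := by
  obtain ⟨x, hx⟩ := s.exists_minimal hne
  exact ⟨x, hx.1, fun w hw => (hs.total hx.1 hw).elim id (hx.2 hw)⟩

lemma exists_subchain_card_eq_isLeast_isGreatest {r : ℕ} (hs : IsChain (· ≤ ·) (s : Set α))
    (hr : 0 < r) (hrs : r ≤ s.card) :
    ∃ d ⊆ s, d.card = r ∧ IsChain (· ≤ ·) (d : Set α) ∧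
      ∃ x z, IsLeast (d : Set α) x ∧ IsGreatest (d : Set α) z := by
  obtain ⟨d, hds, hd_card⟩ := exists_subset_card_eq hrs
  have hd : IsChain (· ≤ ·) (d : Set α) := hs.mono (coe_subset.2 hds)
  have hd_ne : d.Nonempty := card_pos.1 (hd_card ▸ hr)
  obtain ⟨x, hx⟩ := exists_isLeast_of_isChain hd hd_ne
  obtain ⟨z, hz⟩ := exists_isGreatest_of_isChain hd hd_ne
  exact ⟨d, hds, hd_card, hd, x, z, hx, hz⟩

end Finset

section ChainCards

variable {α : Type*} [PartialOrder α]

def chainCardsWithMax (z : α) : Set ℕ :=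
  {k | ∃ c : Finset α, c.card = k ∧ IsChain (· ≤ ·) (c : Set α) ∧ z ∈ c ∧ ∀ w ∈ c, w ≤ z}

lemma one_mem_chainCardsWithMax (z : α) : 1 ∈ chainCardsWithMax z :=
  ⟨{z}, by simp, by simp, by simp, by simp⟩

lemma add_card_sub_one_mem_chainCardsWithMax {x z : α} {m : ℕ} (hm : m ∈ chainCardsWithMax x)
    {c : Finset α} (hc : IsChain (· ≤ ·) (c : Set α)) (hx : IsLeast (c : Set α) x)
    (hz : IsGreatest (c : Set α) z) : m + c.card - 1 ∈ chainCardsWithMax z := by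
  classical
  obtain ⟨d, rfl, hd, hxd, hdx⟩ := hm
  have hinter : d ∩ c = {x} := by
    refine Finset.Subset.antisymm (fun w hw => ?_) (Finset.singleton_subset_iff.2 ?_)
    · rw [Finset.mem_inter] at hw
      exact Finset.mem_singleton.2 (le_antisymm (hdx w hw.1) (hx.2 hw.2))
    · exact Finset.mem_inter.2 ⟨hxd, hx.1⟩
  refine ⟨d ∪ c, ?_, ?_, Finset.mem_union_right _ hz.1, fun w hw => ?_⟩
  · have := Finset.card_union_add_card_inter d c
    rw [hinter, Finset.card_singleton] at this
    omega
  · rw [Finset.coe_union]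
    exact isChain_union.2 ⟨hd, hc, fun a ha b hb _ => Or.inl ((hdx a ha).trans (hx.2 hb))⟩
  · rcases Finset.mem_union.1 hw with hw | hw
    · exact (hdx w hw).trans (hz.2 hx.1)
    · exact hz.2 hw

end ChainCards

theorem interval_nonempty_and_levels_have_small_height_general
    {α : Type*} [PartialOrder α]
    (r q : ℕ) (hr : 2 ≤ r)
    -- `q` is the height of `P`
    (hq : IsGreatest {k | ∃ c : Finset α, c.card = k ∧ IsChain (· ≤ ·) (c : Set α)} q)
    -- `h` is the height function of `P`
    (h : α → ℕ)
    (hh : ∀ z : α, IsGreatest {k | ∃ c : Finset α, c.card = k ∧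
      IsChain (· ≤ ·) (c : Set α) ∧ z ∈ c ∧ ∀ w ∈ c, w ≤ z} (h z))
    -- `Z x` is the set of tops of chains of size `r` with minimum element `x`
    (Z : α → Set α)
    (hZ : ∀ x : α, Z x = {z | ∃ c : Finset α, c.card = r ∧ IsChain (· ≤ ·) (c : Set α) ∧
      x ∈ c ∧ z ∈ c ∧ (∀ w ∈ c, x ≤ w) ∧ (∀ w ∈ c, w ≤ z)})
    -- `b x` is the minimum height of an element of `Z x`, or `q + 1` if `Z x = ∅`
    (b : α → ℕ)
    (hbmin : ∀ x : α, (Z x).Nonempty → IsLeast (h '' Z x) (b x))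
    (hbempty : ∀ x : α, ¬ (Z x).Nonempty → b x = q + 1) :
    -- `I x = Finset.Icc (h x) (b x - 1)` is non-empty, i.e. `h x ≤ b x - 1`
    (∀ x : α, (Finset.Icc (h x) (b x - 1)).Nonempty) ∧
    -- for every `k`, the set `{x | k ∈ I x}` has height at most `r - 1`
    (∀ k : ℕ, ∀ c : Finset α, (∀ x ∈ c, k ∈ Finset.Icc (h x) (b x - 1)) →
      IsChain (· ≤ ·) (c : Set α) → c.card ≤ r - 1) := by
  have hh' : ∀ z, IsGreatest (chainCardsWithMax z) (h z) := hh
  have height_le_of_mem_Z : ∀ x z, z ∈ Z x → h x + r - 1 ≤ h z := by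
    intro x z hz
    rw [hZ x] at hz
    obtain ⟨c, rfl, hc, hxc, hzc, hx_min, hz_max⟩ := hz
    exact (hh' z).2 <|
      add_card_sub_one_mem_chainCardsWithMax (hh' x).1 hc ⟨hxc, hx_min⟩ ⟨hzc, hz_max⟩
  refine ⟨fun x => Finset.nonempty_Icc.2 ?_, fun k c hk hc => ?_⟩
  · by_cases hZx : (Z x).Nonempty
    · obtain ⟨z, hz, hbz⟩ := (hbmin x hZx).1
      have := height_le_of_mem_Z x z hz
      omega
    · obtain ⟨c, hc_card, hc, -⟩ := (hh x).1
      have := hq.2 ⟨c, hc_card, hc⟩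
      have := hbempty x hZx
      omega
  · by_contra! hrc
    obtain ⟨d, hdc, hd_card, hd, x, z, ⟨hxd, hx_min⟩, ⟨hzd, hz_max⟩⟩ :=
      Finset.exists_subchain_card_eq_isLeast_isGreatest (r := r) hc (by omega) (by omega)
    have hzZ : z ∈ Z x := (hZ x) ▸ ⟨d, hd_card, hd, hxd, hzd, hx_min, hz_max⟩
    have hbz : b x ≤ h z := (hbmin x ⟨z, hzZ⟩).2 ⟨z, hzZ, rfl⟩
    have hkx := Finset.mem_Icc.1 (hk x (hdc hxd))
    have hkz := Finset.mem_Icc.1 (hk z (hdc hzd))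
    have := (hh' z).2 (one_mem_chainCardsWithMax z)
    omega

/-- Let `r ≥ 2` and let `P` (the finite partial order `α`) be a finite poset of height `q`,
with height function `h` (`h z` is the maximum size of a chain with maximum element `z`).
For `x ∈ P`, let `Z x` be the set of elements `z` such that `P` contains a chain of size `r`
with minimum element `x` and maximum element `z`; let `b x = min {h z | z ∈ Z x}` if
`Z x ≠ ∅` and `b x = q + 1` otherwise; and let `I x = {h x, h x + 1, …, b x - 1}`.
Then each `I x` is non-empty, and for every integer `k` the set `{x | k ∈ I x}` has height
at most `r - 1` (every chain it contains has size at most `r - 1`). -/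
theorem interval_nonempty_and_levels_have_small_height
    {α : Type*} [PartialOrder α] [Fintype α]
    (r q : ℕ) (hr : 2 ≤ r)
    -- `q` is the height of `P`
    (hq : IsGreatest {k | ∃ c : Finset α, c.card = k ∧ IsChain (· ≤ ·) (c : Set α)} q)
    -- `h` is the height function of `P`
    (h : α → ℕ)
    (hh : ∀ z : α, IsGreatest {k | ∃ c : Finset α, c.card = k ∧
      IsChain (· ≤ ·) (c : Set α) ∧ z ∈ c ∧ ∀ w ∈ c, w ≤ z} (h z))
    -- `Z x` is the set of tops of chains of size `r` with minimum element `x`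
    (Z : α → Set α)
    (hZ : ∀ x : α, Z x = {z | ∃ c : Finset α, c.card = r ∧ IsChain (· ≤ ·) (c : Set α) ∧
      x ∈ c ∧ z ∈ c ∧ (∀ w ∈ c, x ≤ w) ∧ (∀ w ∈ c, w ≤ z)})
    -- `b x` is the minimum height of an element of `Z x`, or `q + 1` if `Z x = ∅`
    (b : α → ℕ)
    (hbmin : ∀ x : α, (Z x).Nonempty → IsLeast (h '' Z x) (b x))
    (hbempty : ∀ x : α, ¬ (Z x).Nonempty → b x = q + 1) :
    -- `I x = Finset.Icc (h x) (b x - 1)` is non-empty, i.e. `h x ≤ b x - 1`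
    (∀ x : α, (Finset.Icc (h x) (b x - 1)).Nonempty) ∧
    -- for every `k`, the set `{x | k ∈ I x}` has height at most `r - 1`
    (∀ k : ℕ, ∀ c : Finset α, (∀ x ∈ c, k ∈ Finset.Icc (h x) (b x - 1)) →
      IsChain (· ≤ ·) (c : Set α) → c.card ≤ r - 1) :=
  interval_nonempty_and_levels_have_small_height_general r q hr hq h hh Z hZ b hbmin hbempty
end
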